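/- Let n ≥ 1. For k = 1,…,n let p_k : ℝ × ℝⁿ → (0,∞) be three-times continuously differentiable functions (the true conditional marginal densities p_k(y_k | x)), and for i = 1,…,n let p̂_i : ℝ × ℝⁿ → (0,∞) be functions (the estimated conditional marginal densities). Let h : ℝⁿ → ℝⁿ be a twice continuously differentiable bijection with twice continuously differentiable inverse, and write H(ŷ) for the Jacobian matrix of h at ŷ, assumed invertible at every ŷ. Suppose that for all ŷ ∈ ℝⁿ and x ∈ ℝⁿ: ∏_{i=1}^n p̂_i(ŷ_i, x) = (∏_{k=1}^n p_k(h(ŷ)_k, x)) · |det H(ŷ)|. For each k and each (y, x) define the vectors v_k(y,x) ∈ ℝⁿ with l-th entry ∂² log p_k(y_k, x) / ∂y_k ∂x_l, and v̊_k(y,x) ∈ ℝⁿ with l-th entry ∂³ log p_k(y_k, x) / ∂y_k² ∂x_l. If for every fixed y ∈ ℝⁿ the 2n vector-valued functions x ↦ v_1(y,x), x ↦ v̊_1(y,x), …, x ↦ v_n(y,x), x ↦ v̊_n(y,x) are linearly independent in the real vector space of functions from ℝⁿ to ℝⁿ, then there exist a permutation σ of {1,…,n} and functions h_1, …, h_n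 : ℝ → ℝ such that h(ŷ)_k = h_k(ŷ_{σ(k)}) for all ŷ ∈ ℝⁿ and all k; that is, h is an invertible component-wise transformation of a permuted version of the coordinates. -/

import Mathlib

/-- Partial derivative of `f : ℝⁿ → ℝ` with respect to the `i`-th coordinate at `x`. -/
noncomputable def pd {k : ℕ} (i : Fin k) (f : (Fin k → ℝ) → ℝ) (x : Fin k → ℝ) : ℝ :=
  deriv (fun t => f (Function.update x i t)) (x i)

/-- Jacobian matrix of `h : ℝⁿ → ℝⁿ` at `yh`, with `(k, i)` entry `∂ h_k / ∂ y_i`. -/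
noncomputable def jac {n : ℕ} (h : (Fin n → ℝ) → (Fin n → ℝ)) (yh : Fin n → ℝ) :
    Matrix (Fin n) (Fin n) ℝ :=
  Matrix.of fun k i => pd i (fun z => h z k) yh

/-- `vvec p k y x` has `l`-th entry `∂² log p_k(y_k, x) / ∂y_k ∂x_l`. -/
noncomputable def vvec {n : ℕ} (p : Fin n → ℝ × (Fin n → ℝ) → ℝ) (k : Fin n)
    (y x : Fin n → ℝ) : Fin n → ℝ := fun l =>
  deriv (fun s => deriv (fun t => Real.log (p k (s, Function.update x l t))) (x l)) (y k)

/-- `vrvec p k y x` has `l`-th entry `∂³ log p_k(y_k, x) / ∂y_k² ∂x_l`. -/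
noncomputable def vrvec {n : ℕ} (p : Fin n → ℝ × (Fin n → ℝ) → ℝ) (k : Fin n)
    (y x : Fin n → ℝ) : Fin n → ℝ := fun l =>
  deriv (deriv (fun s => deriv (fun t => Real.log (p k (s, Function.update x l t))) (x l))) (y k)

/-!
Taking logarithms in the change-of-variables formula gives
`∑ᵢ log p̂ᵢ(ŷᵢ, x) = ∑ₖ log pₖ(h(ŷ)ₖ, x) + log |det H(ŷ)|`. Differentiating in `x_l` removes the
Jacobian term, and the left-hand side shows that `Θ(ŷ) = ∑ₖ ∂_{x_l} log pₖ(h(ŷ)ₖ, x)` has no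
interaction between two different coordinates `ŷᵢ, ŷⱼ`; hence `∂ⱼ∂ᵢΘ = 0`. By the chain rule this
is a linear relation between the `vₖ` and `v̊ₖ` with coefficients `∂ⱼHₖᵢ` and `HₖᵢHₖⱼ`, so linear
independence forces `HₖᵢHₖⱼ = 0`: every row of `H(ŷ)` has at most one nonzero entry. Since `H(ŷ)`
is invertible, its support is the graph of a permutation, which by continuity of `H` and
connectedness of `ℝⁿ` does not depend on `ŷ`. So `h(ŷ)ₖ` only depends on `ŷ_{σ(k)}`.
-/

open Function

section PartialDerivatives

variable {k : ℕ}

theorem hasDerivAt_pd_fderiv {F : Type*} [NormedAddCommGroup F] [NormedSpace ℝ F]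
    {f : (Fin k → ℝ) → F} {x : Fin k → ℝ} (i : Fin k) (hf : DifferentiableAt ℝ f x) :
    HasDerivAt (fun t => f (update x i t)) (fderiv ℝ f x (Pi.single i 1)) (x i) := by
  have hf' : HasFDerivAt f (fderiv ℝ f x) (update x i (x i)) := by
    rw [update_eq_self]; exact hf.hasFDerivAt
  exact hf'.comp_hasDerivAt (x i) (hasDerivAt_update x i (x i))

theorem pd_eq_fderiv {f : (Fin k → ℝ) → ℝ} {x : Fin k → ℝ} (i : Fin k)
    (hf : DifferentiableAt ℝ f x) : pd i f x = fderiv ℝ f x (Pi.single i 1) :=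
  (hasDerivAt_pd_fderiv i hf).deriv

theorem hasDerivAt_pd {f : (Fin k → ℝ) → ℝ} {x : Fin k → ℝ} (i : Fin k)
    (hf : DifferentiableAt ℝ f x) : HasDerivAt (fun t => f (update x i t)) (pd i f x) (x i) :=
  (hasDerivAt_pd_fderiv i hf).differentiableAt.hasDerivAt

theorem contDiff_pd {m : WithTop ℕ∞} {f : (Fin k → ℝ) → ℝ} (hf : ContDiff ℝ (m + 1) f)
    (i : Fin k) : ContDiff ℝ m (pd i f) := by
  have hdiff : Differentiable ℝ f := hf.differentiable (by simp)
  rw [show pd i f = fun x => fderiv ℝ f x (Pi.single i 1) from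
    funext fun x => pd_eq_fderiv i (hdiff x)]
  exact (hf.fderiv_right le_rfl).clm_apply contDiff_const

theorem contDiff_pd_snd {E : Type*} [NormedAddCommGroup E] [NormedSpace ℝ E] {m : WithTop ℕ∞}
    {q : E × (Fin k → ℝ) → ℝ} (hq : ContDiff ℝ (m + 1) q) (l : Fin k) (x : Fin k → ℝ) :
    ContDiff ℝ m fun e => pd l (fun w => q (e, w)) x := by
  have hdiff : Differentiable ℝ q := hq.differentiable (by simp)
  rw [show (fun e => pd l (fun w => q (e, w)) x)
      = fun e => fderiv ℝ (fun w => q (e, w)) x (Pi.single l 1) from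
    funext fun e => pd_eq_fderiv l ((hdiff _).comp x ((differentiableAt_const e).prodMk
      differentiableAt_id))]
  exact (ContDiff.fderiv (f := fun e w => q (e, w)) hq contDiff_const le_rfl).clm_apply
    contDiff_const

theorem Differentiable.eq_of_pd_eq_zero {f : (Fin k → ℝ) → ℝ} (hf : Differentiable ℝ f)
    {i₀ : Fin k} (hpd : ∀ z i, i ≠ i₀ → pd i f z = 0) {z w : Fin k → ℝ} (hzw : z i₀ = w i₀) :
    f z = f w := by
  have hD : ∀ y, fderiv ℝ f y (z - w) = 0 := by
    intro y
    rw [pi_eq_sum_univ' (z - w), map_sum]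
    refine Finset.sum_eq_zero fun i _ => ?_
    by_cases hi : i = i₀
    · simp [hi, hzw]
    · rw [map_smul, ← pd_eq_fderiv i (hf y), hpd y i hi, smul_zero]
  have hline : ∀ t : ℝ, HasDerivAt (fun t : ℝ => f (w + t • (z - w)))
      (fderiv ℝ f (w + t • (z - w)) (z - w)) t := fun t =>
    (hf _).hasFDerivAt.comp_hasDerivAt t
      (by simpa using ((hasDerivAt_id t).smul_const (z - w)).const_add w)
  have := is_const_of_deriv_eq_zero (fun t => (hline t).differentiableAt)
    (fun t => by rw [(hline t).deriv, hD]) 1 0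
  simpa using this

end PartialDerivatives

section RectangleAdditive

variable {ι α M : Type*} [DecidableEq ι] [AddCommGroup M]

-- Discrete form of `∂ᵢ∂ⱼΨ = 0`: `Ψ` has no interaction between the coordinates `i` and `j`.
def RectangleAdditive (Ψ : (ι → α) → M) (i j : ι) : Prop :=
  ∀ y a b, Ψ (update (update y i a) j b) + Ψ y = Ψ (update y i a) + Ψ (update y j b)

theorem rectangleAdditive_sum [Fintype ι] (φ : ι → α → M) {i j : ι} (hij : i ≠ j) :
    RectangleAdditive (fun z => ∑ m, φ m (z m)) i j := by
  intro y a b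
  simp only [← Finset.sum_add_distrib]
  refine Finset.sum_congr rfl fun m _ => ?_
  by_cases hmj : m = j
  · subst hmj
    simp [update_of_ne hij.symm, add_comm]
  · by_cases hmi : m = i
    · subst hmi
      simp [update_of_ne hmj]
    · simp [update_of_ne hmi, update_of_ne hmj]

theorem RectangleAdditive.of_hasDerivAt {F : Type*} [NormedAddCommGroup F] [NormedSpace ℝ F]
    {G : (ι → α) → ℝ → F} {Θ : (ι → α) → F} {i j : ι} {t : ℝ} (hG : RectangleAdditive G i j)
    (hΘ : ∀ z, HasDerivAt (G z) (Θ z) t) : RectangleAdditive Θ i j := by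
  intro y a b
  have hsum := (hΘ (update (update y i a) j b)).add (hΘ y)
  rw [hG y a b] at hsum
  exact hsum.unique ((hΘ _).add (hΘ _))

theorem RectangleAdditive.pd_update {k : ℕ} {Θ : (Fin k → ℝ) → ℝ} {i j : Fin k}
    (hΘ : RectangleAdditive Θ i j) (hij : i ≠ j) (y : Fin k → ℝ) (b : ℝ) :
    pd i Θ (update y j b) = pd i Θ y := by
  have hline : (fun a => Θ (update (update y j b) i a))
      = fun a => Θ (update y i a) + (Θ (update y j b) - Θ y) := by
    funext a
    rw [update_comm hij.symm]
    linear_combination hΘ y a b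
  simp only [pd, hline, deriv_add_const, update_of_ne hij]

end RectangleAdditive

theorem Matrix.exists_perm_ne_zero_iff_of_det_ne_zero {ι R : Type*} [Fintype ι] [DecidableEq ι]
    [CommRing R] [NoZeroDivisors R] {A : Matrix ι ι R} (hA : A.det ≠ 0)
    (hrow : ∀ k i j, i ≠ j → A k i * A k j = 0) :
    ∃ σ : Equiv.Perm ι, ∀ k i, A k i ≠ 0 ↔ i = σ k := by
  have hex : ∀ k, ∃ i, A k i ≠ 0 := fun k => by
    by_contra! h
    exact hA (det_eq_zero_of_row_eq_zero k h)
  choose f hf using hex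
  have hsupp : ∀ k i, A k i ≠ 0 → i = f k := fun k i hi => by
    by_contra hne
    exact mul_ne_zero hi (hf k) (hrow k i (f k) hne)
  have hsurj : Surjective f := fun i => by
    by_contra! h
    exact hA (det_eq_zero_of_column_eq_zero i fun k => by
      by_contra hk
      exact h k (hsupp k i hk).symm)
  exact ⟨Equiv.ofBijective f ⟨Finite.injective_iff_surjective.mpr hsurj, hsurj⟩,
    fun k i => ⟨hsupp k i, fun h => h ▸ hf k⟩⟩

theorem ne_zero_iff_of_existsUnique_ne_zero {X ι M : Type*} [TopologicalSpace X]
    [PreconnectedSpace X] [Zero M] [TopologicalSpace M] [T1Space M] {g : X → ι → M}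
    (hg : ∀ i, Continuous fun x => g x i) (huniq : ∀ x, ∃! i, g x i ≠ 0) (i : ι) (x y : X) :
    g x i ≠ 0 ↔ g y i ≠ 0 := by
  have hS : {x | g x i ≠ 0} = {x | ∀ j, j ≠ i → g x j = 0} := by
    ext z
    obtain ⟨i₀, hi₀, hunique⟩ := huniq z
    constructor
    · intro hz j hj
      by_contra hjz
      exact hj ((hunique j hjz).trans (hunique i hz).symm)
    · intro hz
      by_cases h : i₀ = i
      · exact h ▸ hi₀
      · exact absurd (hz i₀ h) hi₀
  have hclopen : IsClopen {x | g x i ≠ 0} := by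
    refine ⟨?_, isOpen_compl_singleton.preimage (hg i)⟩
    rw [hS]
    simp only [Set.ofPred_forall]
    exact isClosed_iInter fun j => isClosed_iInter fun _ => isClosed_singleton.preimage (hg j)
  change x ∈ {x | g x i ≠ 0} ↔ y ∈ {x | g x i ≠ 0}
  rcases isClopen_iff.mp hclopen with h | h <;> simp [h]

theorem LinearIndependent.eq_zero_of_sum_smul_add_smul {ι R M : Type*} [Fintype ι] [Ring R]
    [AddCommGroup M] [Module R M] {v w : ι → M} (hvw : LinearIndependent R (Sum.elim v w))
    {a b : ι → R} (h : ∑ k, (a k • v k + b k • w k) = 0) : a = 0 ∧ b = 0 := by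
  have hab := Fintype.linearIndependent_iff.mp hvw (Sum.elim a b)
    (by simpa [Fintype.sum_sum_type, Finset.sum_add_distrib] using h)
  exact ⟨funext fun k => hab (.inl k), funext fun k => hab (.inr k)⟩

section MixedPartial

variable {n : ℕ} {U : Fin n → ℝ → ℝ} {h : (Fin n → ℝ) → (Fin n → ℝ)}

theorem pd_sum_comp (hU : ∀ k, Differentiable ℝ (U k)) (hh : Differentiable ℝ h) (i : Fin n)
    (w : Fin n → ℝ) :
    pd i (fun z => ∑ k, U k (h z k)) w = ∑ k, deriv (U k) (h w k) * jac h w k i :=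
  (HasDerivAt.fun_sum fun k _ => (hU k _).hasDerivAt.comp_of_eq (w i)
    (hasDerivAt_pd i ((differentiableAt_pi.mp (hh w)) k)) (by rw [update_eq_self])).deriv

theorem hasDerivAt_pd_sum_comp_update (hU : ∀ k, Differentiable ℝ (U k))
    (hU' : ∀ k, Differentiable ℝ (deriv (U k))) (hh : ContDiff ℝ 2 h) (i j : Fin n)
    (y : Fin n → ℝ) :
    HasDerivAt (fun b => pd i (fun z => ∑ k, U k (h z k)) (update y j b))
      (∑ k, (deriv (deriv (U k)) (h y k) * jac h y k j * jac h y k i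
        + deriv (U k) (h y k) * pd j (fun z => jac h z k i) y)) (y j) := by
  have hd : Differentiable ℝ h := hh.differentiable (by norm_num)
  simp only [pd_sum_comp hU hd]
  refine HasDerivAt.fun_sum fun k _ => ?_
  have hjac : Differentiable ℝ fun z => jac h z k i :=
    (contDiff_pd (m := 1) ((contDiff_pi.mp hh) k) i).differentiable one_ne_zero
  have hprod := ((hU' k _).hasDerivAt.comp_of_eq (y j)
    (hasDerivAt_pd j ((differentiableAt_pi.mp (hd y)) k)) (by rw [update_eq_self])).fun_mul
    (hasDerivAt_pd j (hjac y))
  simp only [comp_apply, update_eq_self] at hprod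
  exact hprod

theorem RectangleAdditive.sum_mixed_partial_eq_zero {i j : Fin n}
    (hΘ : RectangleAdditive (fun z => ∑ k, U k (h z k)) i j) (hij : i ≠ j)
    (hU : ∀ k, Differentiable ℝ (U k)) (hU' : ∀ k, Differentiable ℝ (deriv (U k)))
    (hh : ContDiff ℝ 2 h) (y : Fin n → ℝ) :
    ∑ k, (deriv (deriv (U k)) (h y k) * jac h y k j * jac h y k i
      + deriv (U k) (h y k) * pd j (fun z => jac h z k i) y) = 0 := by
  have hmixed := hasDerivAt_pd_sum_comp_update hU hU' hh i j y
  rw [funext (hΘ.pd_update hij y)] at hmixed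
  exact hmixed.unique (hasDerivAt_const _ _)

end MixedPartial

theorem Real.sum_log_eq_of_prod_eq_mul {ι κ : Type*} [Fintype ι] [Fintype κ] {a : ι → ℝ}
    {b : κ → ℝ} {d : ℝ} (ha : ∀ i, a i ≠ 0) (hb : ∀ k, b k ≠ 0) (hd : d ≠ 0)
    (h : ∏ i, a i = (∏ k, b k) * d) : ∑ i, Real.log (a i) = ∑ k, Real.log (b k) + Real.log d := by
  rw [← Real.log_prod fun i _ => ha i, h,
    Real.log_mul (Finset.prod_ne_zero_iff.mpr fun k _ => hb k) hd, Real.log_prod fun k _ => hb k]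

section LogDensity

variable {n : ℕ} {q φ : Fin n → ℝ × (Fin n → ℝ) → ℝ} {c : (Fin n → ℝ) → ℝ}
  {h : (Fin n → ℝ) → (Fin n → ℝ)}

theorem rectangleAdditive_sum_pd_snd (hq : ∀ k, Differentiable ℝ (q k))
    (hsep : ∀ z w, ∑ m, φ m (z m, w) = ∑ k, q k (h z k, w) + c z) (x : Fin n → ℝ) (l : Fin n)
    {i j : Fin n} (hij : i ≠ j) :
    RectangleAdditive (fun z => ∑ k, pd l (fun w => q k (h z k, w)) x) i j := by
  refine RectangleAdditive.of_hasDerivAt (t := x l)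
    (rectangleAdditive_sum (fun m s t => φ m (s, update x l t)) hij) fun z => ?_
  rw [Finset.sum_fn]
  simp only [hsep]
  exact (HasDerivAt.fun_sum fun k _ => hasDerivAt_pd (f := fun w => q k (h z k, w)) (x := x) l
    ((hq k _).comp x ((differentiableAt_const _).prodMk differentiableAt_id))).add_const _

theorem jac_mul_jac_eq_zero (hq : ∀ k, ContDiff ℝ 3 (q k)) (hh : ContDiff ℝ 2 h)
    (hsep : ∀ z w, ∑ m, φ m (z m, w) = ∑ k, q k (h z k, w) + c z)
    (hli : ∀ y : Fin n → ℝ, LinearIndependent ℝ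
      (Sum.elim (fun k x l => deriv (fun s => pd l (fun w => q k (s, w)) x) (y k))
        (fun k x l => deriv (deriv (fun s => pd l (fun w => q k (s, w)) x)) (y k)) :
        Fin n ⊕ Fin n → (Fin n → ℝ) → Fin n → ℝ))
    (y : Fin n → ℝ) {i j : Fin n} (hij : i ≠ j) (k : Fin n) :
    jac h y k i * jac h y k j = 0 := by
  have hU : ∀ x l k, ContDiff ℝ 2 fun s => pd l (fun w => q k (s, w)) x :=
    fun x l k => contDiff_pd_snd (m := 2) (hq k) l x
  have hmixed := fun x l => (rectangleAdditive_sum_pd_snd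
    (fun k => (hq k).differentiable (by norm_num)) hsep x l hij).sum_mixed_partial_eq_zero
    (U := fun k s => pd l (fun w => q k (s, w)) x) hij
    (fun k => (hU x l k).differentiable two_ne_zero) (fun k => (hU x l k).differentiable_deriv_two)
    hh y
  have hcoeff := ((hli (h y)).eq_zero_of_sum_smul_add_smul
    (a := fun k => pd j (fun z => jac h z k i) y) (b := fun k => jac h y k j * jac h y k i) (by
      funext x l
      simp only [Finset.sum_apply, Pi.add_apply, Pi.smul_apply, smul_eq_mul, Pi.zero_apply]
      rw [← hmixed x l]
      exact Finset.sum_congr rfl fun k _ => by ring)).2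
  simpa [mul_comm] using congrFun hcoeff k

end LogDensity

theorem stmt0_general {n : ℕ}
    (p : Fin n → ℝ × (Fin n → ℝ) → ℝ)
    (hppos : ∀ (k : Fin n) (s : ℝ) (x : Fin n → ℝ), 0 < p k (s, x))
    (hpsmooth : ∀ k, ContDiff ℝ 3 (p k))
    (phat : Fin n → ℝ × (Fin n → ℝ) → ℝ)
    (hphatpos : ∀ (i : Fin n) (s : ℝ) (x : Fin n → ℝ), 0 < phat i (s, x))
    (h : (Fin n → ℝ) → (Fin n → ℝ))
    (hsmooth : ContDiff ℝ 2 h)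
    (hJ : ∀ yh : Fin n → ℝ, IsUnit (jac h yh).det)
    (hchg : ∀ yh x : Fin n → ℝ,
      (∏ i, phat i (yh i, x)) = (∏ k, p k (h yh k, x)) * |(jac h yh).det|)
    (hli : ∀ y : Fin n → ℝ,
      LinearIndependent ℝ
        (Sum.elim (fun k => fun x => vvec p k y x) (fun k => fun x => vrvec p k y x) :
          Fin n ⊕ Fin n → (Fin n → ℝ) → Fin n → ℝ)) :
    ∃ (σ : Equiv.Perm (Fin n)) (hcomp : Fin n → ℝ → ℝ),
      ∀ (yh : Fin n → ℝ) (k : Fin n), h yh k = hcomp k (yh (σ k)) := by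
  have hlogp : ∀ k, ContDiff ℝ 3 fun w => Real.log (p k w) :=
    fun k => (hpsmooth k).log fun w => (hppos k w.1 w.2).ne'
  have hsep : ∀ z w, ∑ m, Real.log (phat m (z m, w))
      = ∑ k, Real.log (p k (h z k, w)) + Real.log |(jac h z).det| := fun z w =>
    Real.sum_log_eq_of_prod_eq_mul (fun m => (hphatpos m _ _).ne') (fun k => (hppos k _ _).ne')
      (abs_ne_zero.mpr (hJ z).ne_zero) (hchg z w)
  have hperm : ∀ z, ∃ σ : Equiv.Perm (Fin n), ∀ k i, jac h z k i ≠ 0 ↔ i = σ k :=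
    fun z => Matrix.exists_perm_ne_zero_iff_of_det_ne_zero (hJ z).ne_zero
      fun k i j hij => jac_mul_jac_eq_zero (φ := fun m w => Real.log (phat m w)) hlogp hsmooth
        hsep hli z hij k
  have huniq : ∀ z k, ∃! i, jac h z k i ≠ 0 := fun z k => by
    obtain ⟨τ, hτ⟩ := hperm z
    exact ⟨τ k, (hτ k _).mpr rfl, fun i hi => (hτ k i).mp hi⟩
  obtain ⟨σ, hσ⟩ := hperm 0
  have hzero : ∀ z k i, i ≠ σ k → jac h z k i = 0 := fun z k i hi => by
    by_contra hne
    exact hi ((hσ k i).mp ((ne_zero_iff_of_existsUnique_ne_zero (g := fun z i => jac h z k i)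
      (fun i => (contDiff_pd (m := 1) ((contDiff_pi.mp hsmooth) k) i).continuous)
      (huniq · k) i z 0).mp hne))
  refine ⟨σ, fun k t => h (update 0 (σ k) t) k, fun z k => ?_⟩
  exact ((differentiable_pi.mp (hsmooth.differentiable (by norm_num))) k).eq_of_pd_eq_zero
    (hzero · k) (by simp)

/-- Identifiability of the temporally latent process (analytic core of Lemma 1):
if the products of the estimated and the true conditional marginal densities are related
by the change-of-variables formula through a C² diffeomorphism `h` with everywhere
invertible Jacobian, and the sufficient-variability (linear independence) condition holds,
then `h` is a component-wise transformation of a permuted version of the coordinates. -/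
theorem stmt0 {n : ℕ} (hn : 1 ≤ n)
    (p : Fin n → ℝ × (Fin n → ℝ) → ℝ)
    (hppos : ∀ (k : Fin n) (s : ℝ) (x : Fin n → ℝ), 0 < p k (s, x))
    (hpsmooth : ∀ k, ContDiff ℝ 3 (p k))
    (phat : Fin n → ℝ × (Fin n → ℝ) → ℝ)
    (hphatpos : ∀ (i : Fin n) (s : ℝ) (x : Fin n → ℝ), 0 < phat i (s, x))
    (h : (Fin n → ℝ) → (Fin n → ℝ))
    (hbij : Function.Bijective h)
    (hsmooth : ContDiff ℝ 2 h)
    (hinv : ∃ g : (Fin n → ℝ) → (Fin n → ℝ),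
      ContDiff ℝ 2 g ∧ Function.LeftInverse g h ∧ Function.RightInverse g h)
    (hJ : ∀ yh : Fin n → ℝ, IsUnit (jac h yh).det)
    (hchg : ∀ yh x : Fin n → ℝ,
      (∏ i, phat i (yh i, x)) = (∏ k, p k (h yh k, x)) * |(jac h yh).det|)
    (hli : ∀ y : Fin n → ℝ,
      LinearIndependent ℝ
        (Sum.elim (fun k => fun x => vvec p k y x) (fun k => fun x => vrvec p k y x) :
          Fin n ⊕ Fin n → (Fin n → ℝ) → Fin n → ℝ)) :
    ∃ (σ : Equiv.Perm (Fin n)) (hcomp : Fin n → ℝ → ℝ),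
      ∀ (yh : Fin n → ℝ) (k : Fin n), h yh k = hcomp k (yh (σ k)) :=
  stmt0_general p hppos hpsmooth phat hphatpos h hsmooth hJ hchg hli
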